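/- The element 𝒫_1' − 𝒫_2' is divisible by u_2 − v − ℏ in ℂ[[ℏ, u_1, u_2, v]]. -/

import Mathlib

/-!
Modulo `w = u₂ - v - ℏ` one may replace `u₂` by `v + ℏ`: with `A = P(u₁, v + ℏ)` and an
explicit second divided difference `S`, `P(u₁, u₂) = A + w S`. The substitution
`θ = reflect : ℏ ↦ -ℏ, u₂ ↔ v` sends `w` to `-w`, `P(u₁, u₂)` to `P(u₁, v)` and `A` to
`P(u₁, u₂ - ℏ) = e^{-ℏ} P(u₁ + ℏ, u₂)`, while `P(u₁ - ℏ/2, v + ℏ/2) = e^{-ℏ/2} A`. Hence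
modulo `w` both `𝒫₁'` and `𝒫₂'` reduce to `e^{ℏ/2} · A · θA · P(u₂, v)`. Each identification
holds because `(x - y) P = e^x - e^y` determines `P` in the domain `ℂ[[ℏ, u₁, u₂, v]]`.
-/

noncomputable section

open MvPowerSeries

/-- The exponential `exp(a·ℏ + b·u₁ + c·u₂ + e·v) ∈ ℂ[[ℏ,u₁,u₂,v]]` of a linear form. -/
def expLin4 (a b c e : ℂ) : MvPowerSeries (Fin 4) ℂ :=
  fun d => (a ^ (d 0) / (d 0).factorial) * (b ^ (d 1) / (d 1).factorial) *
    (c ^ (d 2) / (d 2).factorial) * (e ^ (d 3) / (d 3).factorial)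

namespace MvPowerSeries

variable {σ R : Type*} [CommSemiring R]

theorem coeff_X_mul (i : σ) (f : MvPowerSeries σ R) (d : σ →₀ ℕ) :
    coeff d (X i * f) = if d i = 0 then 0 else coeff (d - Finsupp.single i 1) f := by
  classical
  rw [X, coeff_monomial_mul]
  simp [Finsupp.single_le_iff, Nat.one_le_iff_ne_zero]

theorem coeff_rename_equiv (e : σ ≃ σ) (f : MvPowerSeries σ R) (d : σ →₀ ℕ) :
    coeff d (rename e f) = coeff (d.equivMapDomain e.symm) f := by
  have hd : d = Finsupp.embDomain e.toEmbedding (d.equivMapDomain e.symm) := by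
    ext i
    obtain ⟨j, rfl⟩ := e.surjective i
    rw [show e j = e.toEmbedding j from rfl, Finsupp.embDomain_apply]
    simp
  conv_lhs => rw [hd]
  exact coeff_embDomain_rename _ _ _

theorem rescale_X (a : σ → R) (i : σ) : rescale a (X i : MvPowerSeries σ R) = C (a i) * X i := by
  classical
  ext d
  rw [coeff_rescale, coeff_C_mul, coeff_X]
  split_ifs with h
  · subst h
    simp
  · simp

theorem eq_of_mul_eq_mul_of_coeff_ne_zero {R : Type*} [CommRing R] [NoZeroDivisors R]
    {ℓ f g : MvPowerSeries σ R} (d : σ →₀ ℕ) (hℓ : coeff d ℓ ≠ 0) (h : ℓ * f = ℓ * g) : f = g :=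
  mul_left_cancel₀ ((ne_zero_iff_exists_coeff_ne_zero ℓ).mpr ⟨d, hℓ⟩) h

end MvPowerSeries

theorem Nat.choose_succ_add_succ (s t : ℕ) :
    (s + 1 + (t + 1)).choose (s + 1) = (s + 1 + t).choose (s + 1) + (s + (t + 1)).choose s := by
  rw [show s + 1 + (t + 1) = s + (t + 1) + 1 by omega, Nat.choose_succ_succ', add_comm,
    show s + (t + 1) = s + 1 + t by omega]

theorem pow_div_factorial_succ_mul {K : Type*} [Field K] [CharZero K] (x : K) (n : ℕ) :
    x ^ (n + 1) / (n + 1).factorial * (n + 1) = x * (x ^ n / n.factorial) := by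
  rw [Nat.factorial_succ]
  push_cast
  field_simp
  ring

lemma coeff_expLin4 (a b c e : ℂ) (d : Fin 4 →₀ ℕ) :
    coeff d (expLin4 a b c e) = (a ^ (d 0) / (d 0).factorial) * (b ^ (d 1) / (d 1).factorial) *
      (c ^ (d 2) / (d 2).factorial) * (e ^ (d 3) / (d 3).factorial) := rfl

lemma constantCoeff_expLin4 (a b c e : ℂ) : constantCoeff (expLin4 a b c e) = 1 := by
  rw [← coeff_zero_eq_constantCoeff_apply, coeff_expLin4]
  simp

lemma pderiv_expLin4 (a b c e : ℂ) (i : Fin 4) :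
    pderiv ℂ i (expLin4 a b c e) = ![a, b, c, e] i • expLin4 a b c e := by
  ext d
  rw [coeff_pderiv, coeff_smul, coeff_expLin4, coeff_expLin4]
  fin_cases i <;> simp only [Finsupp.add_apply, Finsupp.single_apply] <;> simp
  · linear_combination (b ^ d 1 / (d 1).factorial * (c ^ d 2 / (d 2).factorial) *
      (e ^ d 3 / (d 3).factorial)) * pow_div_factorial_succ_mul a (d 0)
  · linear_combination (a ^ d 0 / (d 0).factorial * (c ^ d 2 / (d 2).factorial) *
      (e ^ d 3 / (d 3).factorial)) * pow_div_factorial_succ_mul b (d 1)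
  · linear_combination (a ^ d 0 / (d 0).factorial * (b ^ d 1 / (d 1).factorial) *
      (e ^ d 3 / (d 3).factorial)) * pow_div_factorial_succ_mul c (d 2)
  · linear_combination (a ^ d 0 / (d 0).factorial * (b ^ d 1 / (d 1).factorial) *
      (c ^ d 2 / (d 2).factorial)) * pow_div_factorial_succ_mul e (d 3)

lemma expLin4_zero : expLin4 0 0 0 0 = 1 :=
  pderiv.ext (fun i => by fin_cases i <;> simp [pderiv_expLin4]) (by simp [constantCoeff_expLin4])

lemma mul_mul_expLin4_neg_add (a b c e a' b' c' e' : ℂ) :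
    expLin4 a b c e * expLin4 a' b' c' e' * expLin4 (-(a + a')) (-(b + b')) (-(c + c')) (-(e + e'))
      = 1 := by
  refine pderiv.ext (fun i => ?_) (by simp [constantCoeff_expLin4])
  simp only [Derivation.leibniz, pderiv_expLin4, pderiv_one, smul_eq_C_mul]
  fin_cases i <;> simp <;> ring

lemma expLin4_mul (a b c e a' b' c' e' : ℂ) :
    expLin4 a b c e * expLin4 a' b' c' e' = expLin4 (a + a') (b + b') (c + c') (e + e') := by
  have hinv := mul_mul_expLin4_neg_add (a + a') (b + b') (c + c') (e + e') 0 0 0 0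
  simp only [add_zero, expLin4_zero, mul_one] at hinv
  linear_combination expLin4 (a + a') (b + b') (c + c') (e + e') *
      mul_mul_expLin4_neg_add a b c e a' b' c' e' - expLin4 a b c e * expLin4 a' b' c' e' * hinv

lemma rename_swap_expLin4 (a b c e : ℂ) :
    rename (Equiv.swap (1 : Fin 4) 2) (expLin4 a b c e) = expLin4 a c b e := by
  ext d
  rw [coeff_rename_equiv, coeff_expLin4, coeff_expLin4]
  simp only [Finsupp.equivMapDomain_apply, Equiv.symm_swap, Equiv.swap_apply_left,
    Equiv.swap_apply_right, Equiv.swap_apply_of_ne_of_ne, ne_eq, Fin.reduceEq, not_false_eq_true]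
  ring

def reflect : MvPowerSeries (Fin 4) ℂ →+* MvPowerSeries (Fin 4) ℂ :=
  (rescale ![-1, 1, 1, 1]).comp (rename (Equiv.swap (2 : Fin 4) 3)).toRingHom

lemma reflect_X (i : Fin 4) : reflect (X i) = ![-X 0, X 1, X 3, X 2] i := by
  simp only [reflect, RingHom.comp_apply, AlgHom.toRingHom_eq_coe, RingHom.coe_coe, rename_X,
    rescale_X]
  fin_cases i <;> simp [Equiv.swap_apply_of_ne_of_ne]

lemma coeff_reflect (f : MvPowerSeries (Fin 4) ℂ) (d : Fin 4 →₀ ℕ) :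
    coeff d (reflect f) = (-1) ^ d 0 * coeff (d.equivMapDomain (Equiv.swap 2 3)) f := by
  simp only [reflect, RingHom.comp_apply, coeff_rescale, AlgHom.toRingHom_eq_coe, RingHom.coe_coe,
    coeff_rename_equiv, Finsupp.prod_fintype _ _ (fun i => pow_zero _), Fin.prod_univ_four]
  simp

lemma reflect_expLin4 (a b c e : ℂ) : reflect (expLin4 a b c e) = expLin4 (-a) b e c := by
  ext d
  rw [coeff_reflect, coeff_expLin4, coeff_expLin4]
  simp only [Finsupp.equivMapDomain_apply, Equiv.symm_swap, ne_eq, Fin.reduceEq,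
    not_false_eq_true, Equiv.swap_apply_of_ne_of_ne, Equiv.swap_apply_left, Equiv.swap_apply_right]
  rw [neg_pow]
  ring

/-- `P(u₁, v + ℏ)`. -/
def expDivDiff : MvPowerSeries (Fin 4) ℂ :=
  fun d => if d 2 = 0 then ((d 0 + d 3).choose (d 0) : ℂ) / (d 0 + d 1 + d 3 + 1).factorial else 0

def expDivDiff₂ : MvPowerSeries (Fin 4) ℂ :=
  fun d => ((d 0 + d 3).choose (d 0) : ℂ) / (d 0 + d 1 + d 2 + d 3 + 2).factorial

lemma X_mul_expDivDiff : (X 1 - X 3 - X 0) * expDivDiff = expLin4 0 1 0 0 - expLin4 1 0 0 1 := by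
  ext d
  simp only [sub_mul, map_sub, coeff_X_mul, coeff_expLin4]
  simp only [expDivDiff, coeff_apply, Finsupp.tsub_apply, Finsupp.single_apply, Fin.reduceEq,
    ↓reduceIte, tsub_zero, one_ne_zero, zero_ne_one, one_pow, one_div]
  generalize d 0 = i, d 1 = m, d 2 = a, d 3 = j
  rcases a with _ | a
  swap; · simp
  -- Pascal's rule in the exponents of `ℏ` and `v`
  rcases i with _ | s <;> rcases j with _ | t <;> rcases m with _ | u <;> simp
  · ring_nf
  · ring_nf
  · rw [show s + (t + 1) + 1 = s + 1 + (t + 1) by omega,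
      show s + 1 + t + 1 = s + 1 + (t + 1) by omega, ← mul_inv, ← neg_div, ← sub_div, ← neg_add',
      ← Nat.cast_add, ← Nat.choose_succ_add_succ, Nat.cast_add_choose]
    have := (s + 1 + (t + 1)).factorial_ne_zero
    field_simp
  · rw [Nat.choose_succ_add_succ, Nat.cast_add]
    ring_nf

lemma X_mul_expDivDiff₂ :
    (X 1 - X 2) * expDivDiff₂ = expDivDiff - rename (Equiv.swap 1 2) expDivDiff := by
  ext d
  simp only [sub_mul, map_sub, coeff_X_mul, coeff_rename_equiv]
  simp only [expDivDiff, expDivDiff₂, coeff_apply, Finsupp.tsub_apply, Finsupp.single_apply,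
    Finsupp.equivMapDomain_apply, one_ne_zero, ↓reduceIte, tsub_zero, Fin.reduceEq, Equiv.symm_swap,
    Equiv.swap_apply_right, ne_eq, zero_ne_one, not_false_eq_true, Equiv.swap_apply_of_ne_of_ne,
    Equiv.swap_apply_left]
  generalize d 0 = i, d 1 = m, d 2 = a, d 3 = j
  rcases m with _ | u <;> rcases a with _ | c <;> simp <;> ring_nf

lemma X_mul_expDivDiff_add :
    (X 1 - X 2) * (expDivDiff + (X 2 - X 3 - X 0) * expDivDiff₂)
      = expLin4 0 1 0 0 - expLin4 0 0 1 0 := by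
  have hR := congrArg (rename (Equiv.swap (1 : Fin 4) 2)) X_mul_expDivDiff
  simp only [map_mul, map_sub, rename_X, rename_swap_expLin4, Equiv.swap_apply_left,
    Equiv.swap_apply_of_ne_of_ne, ne_eq, Fin.reduceEq, not_false_eq_true] at hR
  linear_combination X_mul_expDivDiff - hR + (X 2 - X 3 - X 0) * X_mul_expDivDiff₂

lemma reflect_X_two_sub : reflect (X 2 - X 3 - X 0) = -(X 2 - X 3 - X 0) := by
  simp only [map_sub, reflect_X, Matrix.cons_val]
  ring

lemma X_mul_expLin4_mul_reflect_expDivDiff :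
    (X 1 + X 0 - X 2) * (expLin4 1 0 0 0 * reflect expDivDiff)
      = expLin4 1 1 0 0 - expLin4 0 0 1 0 := by
  rw [mul_left_comm, show X 1 + X 0 - X 2 = reflect (X 1 - X 3 - X 0) by
    simp only [map_sub, reflect_X, Matrix.cons_val]; ring,
    ← map_mul, X_mul_expDivDiff, map_sub, reflect_expLin4, reflect_expLin4, mul_sub, expLin4_mul,
    expLin4_mul]
  norm_num

lemma X_mul_expLin4_mul_expDivDiff :
    (X 1 - X 3 - X 0) * (expLin4 (-(1/2)) 0 0 0 * expDivDiff)
      = expLin4 (-(1/2)) 1 0 0 - expLin4 (1/2) 0 0 1 := by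
  rw [mul_left_comm, X_mul_expDivDiff, mul_sub, expLin4_mul, expLin4_mul]
  norm_num

lemma X_mul_reflect_expDivDiff_add :
    (X 1 - X 3) * reflect (expDivDiff + (X 2 - X 3 - X 0) * expDivDiff₂)
      = expLin4 0 1 0 0 - expLin4 0 0 0 1 := by
  rw [show X 1 - X 3 = reflect (X 1 - X 2) by simp [reflect_X], ← map_mul, X_mul_expDivDiff_add,
    map_sub, reflect_expLin4, reflect_expLin4]
  norm_num

theorem statement14_general
    (Pa Pb Pc Pd Pe : MvPowerSeries (Fin 4) ℂ)
    -- Pa = P(u₁+ℏ, u₂)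
    (hPa : (X 1 + X 0 - X 2) * Pa = expLin4 1 1 0 0 - expLin4 0 0 1 0)
    -- Pb = P(u₁−ℏ/2, v+ℏ/2)
    (hPb : (X 1 - X 3 - X 0) * Pb = expLin4 (-(1/2)) 1 0 0 - expLin4 (1/2) 0 0 1)
    -- Pd = P(u₁, u₂)
    (hPd : (X 1 - X 2) * Pd = expLin4 0 1 0 0 - expLin4 0 0 1 0)
    -- Pe = P(u₁, v)
    (hPe : (X 1 - X 3) * Pe = expLin4 0 1 0 0 - expLin4 0 0 0 1) :
    ∃ Q : MvPowerSeries (Fin 4) ℂ,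
      Pa * Pb * Pc - expLin4 (1/2) 0 0 0 * Pd * Pe * Pc = (X 2 - X 3 - X 0) * Q := by
  set A := expDivDiff
  set S := expDivDiff₂
  set w : MvPowerSeries (Fin 4) ℂ := X 2 - X 3 - X 0
  have ha : Pa = expLin4 1 0 0 0 * reflect A := eq_of_mul_eq_mul_of_coeff_ne_zero
    (Finsupp.single 1 1) (by simp [coeff_X, Finsupp.single_eq_single_iff])
    (hPa.trans X_mul_expLin4_mul_reflect_expDivDiff.symm)
  have hb : Pb = expLin4 (-(1/2)) 0 0 0 * A := eq_of_mul_eq_mul_of_coeff_ne_zero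
    (Finsupp.single 1 1) (by simp [coeff_X, Finsupp.single_eq_single_iff])
    (hPb.trans X_mul_expLin4_mul_expDivDiff.symm)
  have hd : Pd = A + w * S := eq_of_mul_eq_mul_of_coeff_ne_zero
    (Finsupp.single 1 1) (by simp [coeff_X, Finsupp.single_eq_single_iff])
    (hPd.trans X_mul_expDivDiff_add.symm)
  have he : Pe = reflect (A + w * S) := eq_of_mul_eq_mul_of_coeff_ne_zero
    (Finsupp.single 1 1) (by simp [coeff_X, Finsupp.single_eq_single_iff])
    (hPe.trans X_mul_reflect_expDivDiff_add.symm)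
  have hexp : expLin4 1 0 0 0 * expLin4 (-(1/2)) 0 0 0 = expLin4 (1/2) 0 0 0 := by
    rw [expLin4_mul]
    norm_num
  refine ⟨expLin4 (1/2) 0 0 0 * (A * reflect S - S * reflect A + w * S * reflect S) * Pc, ?_⟩
  rw [ha, hb, hd, he, map_add, map_mul, reflect_X_two_sub]
  linear_combination (A * reflect A * Pc) * hexp

/-- In `ℂ[[ℏ, u₁, u₂, v]]` (variables `ℏ = X 0`, `u₁ = X 1`,
`u₂ = X 2`, `v = X 3`) the element `𝒫₁' − 𝒫₂'` is divisible by `u₂ − v − ℏ`, where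
`𝒫₁' = P(u₁+ℏ, u₂)·P(u₁−ℏ/2, v+ℏ/2)·P(u₂, v)`,
`𝒫₂' = e^{ℏ/2}·P(u₁, u₂)·P(u₁, v)·P(u₂, v)`
and `(x − y)·P(x, y) = e^x − e^y`.  Each substituted copy of `P` is pinned down by its
unique algebraic characterisation below. -/
theorem statement14
    (Pa Pb Pc Pd Pe : MvPowerSeries (Fin 4) ℂ)
    -- Pa = P(u₁+ℏ, u₂)
    (hPa : (X 1 + X 0 - X 2) * Pa = expLin4 1 1 0 0 - expLin4 0 0 1 0)
    -- Pb = P(u₁−ℏ/2, v+ℏ/2)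
    (hPb : (X 1 - X 3 - X 0) * Pb = expLin4 (-(1/2)) 1 0 0 - expLin4 (1/2) 0 0 1)
    -- Pc = P(u₂, v)
    (hPc : (X 2 - X 3) * Pc = expLin4 0 0 1 0 - expLin4 0 0 0 1)
    -- Pd = P(u₁, u₂)
    (hPd : (X 1 - X 2) * Pd = expLin4 0 1 0 0 - expLin4 0 0 1 0)
    -- Pe = P(u₁, v)
    (hPe : (X 1 - X 3) * Pe = expLin4 0 1 0 0 - expLin4 0 0 0 1) :
    ∃ Q : MvPowerSeries (Fin 4) ℂ,
      Pa * Pb * Pc - expLin4 (1/2) 0 0 0 * Pd * Pe * Pc = (X 2 - X 3 - X 0) * Q :=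
  statement14_general Pa Pb Pc Pd Pe hPa hPb hPd hPe

end
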